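/- arXiv:2112.13173 — 2 statements merged into one kernel-verified Lean document; each statement's English description precedes it below -/
import Mathlib

section
/- (Theorem 3.1, spectrum) With H⁽¹⁾ ∈ ℝ^{(k+1)×(k+1)} the lumped matrix from Theorem 3.1, H⁽¹⁾ has the same nonzero eigenvalues as H: for every λ ≠ 0, λ is an eigenvalue of H if and only if λ is an eigenvalue of H⁽¹⁾. -/
/-!
Conjugating by the permutation matrix turns `H` into the block matrix `[[X, c J], [c J, c J]]`,
where `X` is the upper-left block of `H⁽¹⁾`. This matrix factors as `A B` with
`A` the `(k + m) × (k + 1)` matrix obtained from `H⁽¹⁾` by repeating its last row `m` times and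
`B = [[I, 0], [0, eᵀ / m]]`, which averages the last `m` coordinates, while `B A = H⁽¹⁾`.
Finally `A B` and `B A` have the same nonzero eigenvalues: `A B v = λ v` with `λ ≠ 0` forces
`B v ≠ 0` and `B A (B v) = λ B v`.
-/

open Matrix

namespace Matrix

section Eigenvalue

variable {R : Type*} [CommRing R] {ι κ : Type*} [Fintype ι] [Fintype κ]

def HasEigenvalue (M : Matrix ι ι R) (lam : R) : Prop :=
  ∃ v : ι → R, v ≠ 0 ∧ M *ᵥ v = lam • v

variable [NoZeroDivisors R]

theorem HasEigenvalue.mul_comm {A : Matrix ι κ R} {B : Matrix κ ι R} {lam : R} (hlam : lam ≠ 0)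
    (h : (A * B).HasEigenvalue lam) : (B * A).HasEigenvalue lam := by
  obtain ⟨v, hv, hABv⟩ := h
  have hA : A *ᵥ (B *ᵥ v) = lam • v := by rw [mulVec_mulVec, hABv]
  refine ⟨B *ᵥ v, fun hBv => hv ?_, ?_⟩
  · simpa [hBv, hlam, eq_comm] using hA
  · rw [← mulVec_mulVec, hA, mulVec_smul]

theorem hasEigenvalue_mul_comm {A : Matrix ι κ R} {B : Matrix κ ι R} {lam : R} (hlam : lam ≠ 0) :
    (A * B).HasEigenvalue lam ↔ (B * A).HasEigenvalue lam :=
  ⟨HasEigenvalue.mul_comm hlam, HasEigenvalue.mul_comm hlam⟩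

end Eigenvalue

section Permutation

variable {R : Type*} [Semiring R] {ι : Type*} [Fintype ι] [DecidableEq ι] (σ : Equiv.Perm ι)

theorem permMatrix_mul_transpose_self : σ.permMatrix R * (σ.permMatrix R)ᵀ = 1 := by
  rw [transpose_permMatrix, ← permMatrix_mul, inv_mul_cancel, permMatrix_one]

theorem transpose_permMatrix_mul_self : (σ.permMatrix R)ᵀ * σ.permMatrix R = 1 := by
  rw [transpose_permMatrix, ← permMatrix_mul, mul_inv_cancel, permMatrix_one]

theorem permMatrix_mul_of_const (a : R) :
    σ.permMatrix R * of (fun _ _ : ι => a) = of fun _ _ => a := by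
  rw [Equiv.Perm.permMatrix, PEquiv.toMatrix_toPEquiv_mul]
  rfl

theorem of_const_mul_transpose_permMatrix (a : R) :
    of (fun _ _ : ι => a) * (σ.permMatrix R)ᵀ = of fun _ _ => a := by
  rw [transpose_permMatrix, Equiv.Perm.permMatrix, PEquiv.mul_toMatrix_toPEquiv]
  rfl

end Permutation

section Similarity

variable {R : Type*} [CommRing R] {ι : Type*} [Fintype ι] [DecidableEq ι]

theorem HasEigenvalue.conj {M P Q : Matrix ι ι R} {lam : R} (hPQ : P * Q = 1)
    (h : M.HasEigenvalue lam) : (Q * M * P).HasEigenvalue lam := by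
  obtain ⟨v, hv, hMv⟩ := h
  refine ⟨Q *ᵥ v, fun hQv => hv ?_, ?_⟩
  · rw [← one_mulVec v, ← hPQ, ← mulVec_mulVec, hQv, mulVec_zero]
  · rw [mulVec_mulVec, Matrix.mul_assoc (Q * M), hPQ, Matrix.mul_one, ← mulVec_mulVec, hMv,
      mulVec_smul]

theorem hasEigenvalue_conj_iff {M P Q : Matrix ι ι R} {lam : R} (hQP : Q * P = 1) :
    (Q * M * P).HasEigenvalue lam ↔ M.HasEigenvalue lam := by
  have hPQ : P * Q = 1 := mul_eq_one_comm.mp hQP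
  refine ⟨fun h => ?_, HasEigenvalue.conj hPQ⟩
  have hM : P * (Q * M * P) * Q = M := by
    rw [← Matrix.mul_assoc P, ← Matrix.mul_assoc P, hPQ, Matrix.one_mul, Matrix.mul_assoc, hPQ,
      Matrix.mul_one]
  simpa only [hM] using h.conj hQP

end Similarity

theorem conj_mul_transpose_self {R : Type*} [CommSemiring R] {ι : Type*} [Fintype ι] [DecidableEq ι]
    {P : Matrix ι ι R} (hP : Pᵀ * P = 1) (L : Matrix ι ι R) :
    P * (L * Lᵀ) * Pᵀ = (P * L * Pᵀ) * (P * L * Pᵀ)ᵀ := by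
  simp only [transpose_mul, transpose_transpose, Matrix.mul_assoc]
  rw [← Matrix.mul_assoc Pᵀ P, hP, Matrix.one_mul]

theorem fromBlocks_zero_zero_mul_transpose_self {R : Type*} [CommSemiring R]
    {κ μ : Type*} [Fintype κ] [Fintype μ] (A : Matrix κ κ R) (B : Matrix κ μ R) :
    fromBlocks A B 0 0 * (fromBlocks A B 0 0)ᵀ =
      fromBlocks (A * Aᵀ + B * Bᵀ) 0 0 (0 : Matrix μ μ R) := by
  simp [fromBlocks_transpose, fromBlocks_multiply]

section Lumping

variable {K : Type*} [Field K] {κ μ : Type*} [Fintype κ] [Fintype μ] [DecidableEq κ]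

theorem hasEigenvalue_fromBlocks_const_iff (X : Matrix κ κ K) (c : K) {lam : K}
    (hμ : (Fintype.card μ : K) ≠ 0) (hlam : lam ≠ 0) :
    (fromBlocks X (of fun _ _ => c) (of fun _ _ => c) (of fun _ _ => c) :
        Matrix (κ ⊕ μ) (κ ⊕ μ) K).HasEigenvalue lam ↔
      (fromBlocks X (of fun _ _ => c * Fintype.card μ) (of fun _ _ => c)
        (of fun _ _ => c * Fintype.card μ) :
        Matrix (κ ⊕ Fin 1) (κ ⊕ Fin 1) K).HasEigenvalue lam := by
  set A : Matrix (κ ⊕ μ) (κ ⊕ Fin 1) K := fromBlocks X (of fun _ _ => c * Fintype.card μ)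
    (of fun _ _ => c) (of fun _ _ => c * Fintype.card μ)
  set B : Matrix (κ ⊕ Fin 1) (κ ⊕ μ) K := fromBlocks 1 0 0 (of fun _ _ => (Fintype.card μ : K)⁻¹)
  have hAB : A * B = fromBlocks X (of fun _ _ => c) (of fun _ _ => c) (of fun _ _ => c) := by
    simp only [A, B, fromBlocks_multiply]
    congr 1 <;> ext <;> simp [mul_apply, hμ]
  have hBA : B * A = fromBlocks X (of fun _ _ => c * Fintype.card μ) (of fun _ _ => c)
      (of fun _ _ => c * Fintype.card μ) := by
    simp only [A, B, fromBlocks_multiply]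
    congr 1 <;> ext <;> simp [mul_apply, hμ]
  rw [← hAB, ← hBA]
  exact hasEigenvalue_mul_comm hlam

end Lumping

end Matrix

theorem lumped_same_nonzero_eigenvalues_general (k m : ℕ) (hm : 0 < m) (ξ : ℝ)
    (L P : Matrix (Fin k ⊕ Fin m) (Fin k ⊕ Fin m) ℝ)
    (hP : ∃ σ : Equiv.Perm (Fin k ⊕ Fin m), P = σ.permMatrix ℝ)
    (L11 : Matrix (Fin k) (Fin k) ℝ) (L12 : Matrix (Fin k) (Fin m) ℝ)
    (hL : P * L * Pᵀ = Matrix.fromBlocks L11 L12 0 0) :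
    let n : ℝ := (k : ℝ) + m
    let c : ℝ := (1 - ξ) / n
    let H : Matrix (Fin k ⊕ Fin m) (Fin k ⊕ Fin m) ℝ :=
      ξ • (L * Lᵀ) + c • Matrix.of (fun _ _ => (1 : ℝ))
    let H1 : Matrix (Fin k ⊕ Fin 1) (Fin k ⊕ Fin 1) ℝ :=
      Matrix.fromBlocks
        (ξ • (L11 * L11ᵀ + L12 * L12ᵀ) + c • Matrix.of (fun _ _ => (1 : ℝ)))
        (Matrix.of (fun _ _ => c * m))
        (Matrix.of (fun _ _ => c))
        (Matrix.of (fun _ _ => c * m))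
    ∀ lam : ℝ, lam ≠ 0 →
      ((∃ v : Fin k ⊕ Fin m → ℝ, v ≠ 0 ∧ H *ᵥ v = lam • v) ↔
        (∃ w : Fin k ⊕ Fin 1 → ℝ, w ≠ 0 ∧ H1 *ᵥ w = lam • w)) := by
  intro n c H H1 lam hlam
  obtain ⟨σ, rfl⟩ := hP
  have hconj : σ.permMatrix ℝ * H * (σ.permMatrix ℝ)ᵀ =
      fromBlocks (ξ • (L11 * L11ᵀ + L12 * L12ᵀ) + c • of fun _ _ => 1)
        (of fun _ _ => c) (of fun _ _ => c) (of fun _ _ => c) := by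
    simp only [H, Matrix.mul_add, Matrix.add_mul, Matrix.mul_smul, Matrix.smul_mul,
      conj_mul_transpose_self (transpose_permMatrix_mul_self σ), hL,
      fromBlocks_zero_zero_mul_transpose_self, permMatrix_mul_of_const,
      of_const_mul_transpose_permMatrix]
    ext (i | i) (j | j) <;> simp [mul_add]
  change H.HasEigenvalue lam ↔ H1.HasEigenvalue lam
  rw [← hasEigenvalue_conj_iff (permMatrix_mul_transpose_self σ), hconj]
  have hm' : (Fintype.card (Fin m) : ℝ) ≠ 0 := by simpa using hm.ne'
  simpa only [Fintype.card_fin] using hasEigenvalue_fromBlocks_const_iff (κ := Fin k) _ c hm' hlam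

/-- Theorem 3.1 (spectrum): the lumped matrix `H⁽¹⁾` of order `k+1` has the same
nonzero eigenvalues as the hub matrix `H`. -/
theorem lumped_same_nonzero_eigenvalues (k m : ℕ) (hm : 0 < m)
    (ξ : ℝ) (hξ0 : 0 < ξ) (hξ1 : ξ < 1)
    (L P : Matrix (Fin k ⊕ Fin m) (Fin k ⊕ Fin m) ℝ)
    (hP : ∃ σ : Equiv.Perm (Fin k ⊕ Fin m), P = σ.permMatrix ℝ)
    (L11 : Matrix (Fin k) (Fin k) ℝ) (L12 : Matrix (Fin k) (Fin m) ℝ)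
    (hL : P * L * Pᵀ = Matrix.fromBlocks L11 L12 0 0) :
    let n : ℝ := (k : ℝ) + m
    let c : ℝ := (1 - ξ) / n
    let H : Matrix (Fin k ⊕ Fin m) (Fin k ⊕ Fin m) ℝ :=
      ξ • (L * Lᵀ) + c • Matrix.of (fun _ _ => (1 : ℝ))
    let H1 : Matrix (Fin k ⊕ Fin 1) (Fin k ⊕ Fin 1) ℝ :=
      Matrix.fromBlocks
        (ξ • (L11 * L11ᵀ + L12 * L12ᵀ) + c • Matrix.of (fun _ _ => (1 : ℝ)))
        (Matrix.of (fun _ _ => c * m))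
        (Matrix.of (fun _ _ => c))
        (Matrix.of (fun _ _ => c * m))
    ∀ lam : ℝ, lam ≠ 0 →
      ((∃ v : Fin k ⊕ Fin m → ℝ, v ≠ 0 ∧ H *ᵥ v = lam • v) ↔
        (∃ w : Fin k ⊕ Fin 1 → ℝ, w ≠ 0 ∧ H1 *ᵥ w = lam • w)) :=
  lumped_same_nonzero_eigenvalues_general k m hm ξ L P hP L11 L12 hL
end

section
/- (Generalization of Theorem 3.1, Remark 3.2) Let Ŷ ∈ ℝ^{m×m} be any invertible matrix satisfying Ŷ e = e₁, where e ∈ ℝ^m is the all-ones vector and e₁ is the first standard basis vector, and set X̂ = diag(I_k, Ŷ). If P L Pᵀ = [[L₁₁, L₁₂], [0, 0]], then the last m − 1 rows of X̂ P H Pᵀ X̂⁻¹ are zero. -/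
/-!
Conjugation by the permutation fixes the all-ones matrix and, since `P` is orthogonal, turns
`L Lᵀ` into `(P L Pᵀ)(P L Pᵀ)ᵀ`, whose last `m` rows vanish. So every entry in the last `m` rows
of `P H Pᵀ` equals `(1 - ξ) / n`. Since `Ŷ e = e₁`, each row of `Ŷ` after the first sums to zero
and therefore annihilates these constant columns; the corresponding rows of `X̂ P H Pᵀ` vanish,
and so do those of `X̂ P H Pᵀ X̂⁻¹`.
-/

open Matrix

namespace Matrix

variable {l m n o R : Type*}

lemma mul_apply_eq_zero_of_row_eq_zero [Fintype m] [NonUnitalNonAssocSemiring R]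
    {A : Matrix l m R} {i : l} (hi : A i = 0) (B : Matrix m o R) (j : o) :
    (A * B) i j = 0 := by
  rw [mul_apply_eq_vecMul, hi, zero_vecMul, Pi.zero_apply]

lemma mul_mul_transpose_conj [Fintype n] [DecidableEq n] [CommSemiring R] {P : Matrix n n R}
    (hP : Pᵀ * P = 1) (L : Matrix n n R) :
    P * (L * Lᵀ) * Pᵀ = P * L * Pᵀ * (P * L * Pᵀ)ᵀ := by
  simp only [transpose_mul, transpose_transpose, Matrix.mul_assoc]
  rw [← Matrix.mul_assoc Pᵀ P, hP, Matrix.one_mul]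

section Perm

variable [Fintype n] [DecidableEq n]

lemma permMatrix_transpose_mul_self [NonAssocSemiring R] (σ : Equiv.Perm n) :
    (σ.permMatrix R)ᵀ * σ.permMatrix R = 1 := by
  rw [transpose_permMatrix, ← permMatrix_mul, mul_inv_cancel, permMatrix_one]

lemma permMatrix_mul_of_const_mul_transpose [NonAssocSemiring R] (σ : Equiv.Perm n) (a : R) :
    σ.permMatrix R * of (fun _ _ => a) * (σ.permMatrix R)ᵀ = of (fun _ _ => a) := by
  rw [transpose_permMatrix, PEquiv.toMatrix_toPEquiv_mul, PEquiv.mul_toMatrix_toPEquiv]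
  rfl

lemma permMatrix_conj_apply_of_conj_row_eq_zero [CommRing R] (σ : Equiv.Perm n)
    {L : Matrix n n R} {i : n} (hi : (σ.permMatrix R * L * (σ.permMatrix R)ᵀ) i = 0)
    (ξ c : R) (j : n) :
    (σ.permMatrix R * (ξ • (L * Lᵀ) + c • of fun _ _ => 1) * (σ.permMatrix R)ᵀ :
      Matrix n n R) i j = c := by
  rw [Matrix.mul_add, Matrix.add_mul, Matrix.mul_smul, Matrix.smul_mul, Matrix.mul_smul,
    Matrix.smul_mul, mul_mul_transpose_conj (permMatrix_transpose_mul_self σ),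
    permMatrix_mul_of_const_mul_transpose, add_apply, smul_apply, smul_apply,
    mul_apply_eq_zero_of_row_eq_zero hi]
  simp

end Perm

lemma fromBlocks_one_zero_zero_mul_apply_inr [Fintype l] [Fintype m] [DecidableEq l]
    [CommSemiring R] (Y : Matrix m m R) {A : Matrix (l ⊕ m) o R} {j : o} {c : R}
    (hA : ∀ b, A (Sum.inr b) j = c) (i : m) :
    (fromBlocks (1 : Matrix l l R) 0 0 Y * A) (Sum.inr i) j = c * (Y *ᵥ fun _ => 1) i := by
  rw [mul_apply, Fintype.sum_sum_type]
  simp [hA, mulVec, dotProduct, Finset.mul_sum, mul_comm]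

end Matrix

theorem generalized_lumping_zero_rows_general (k r : ℕ)
    (ξ : ℝ)
    (L P : Matrix (Fin k ⊕ (Fin 1 ⊕ Fin r)) (Fin k ⊕ (Fin 1 ⊕ Fin r)) ℝ)
    (hP : ∃ σ : Equiv.Perm (Fin k ⊕ (Fin 1 ⊕ Fin r)), P = σ.permMatrix ℝ)
    (L11 : Matrix (Fin k) (Fin k) ℝ) (L12 : Matrix (Fin k) (Fin 1 ⊕ Fin r) ℝ)
    (hL : P * L * Pᵀ = Matrix.fromBlocks L11 L12 0 0)
    (Yhat : Matrix (Fin 1 ⊕ Fin r) (Fin 1 ⊕ Fin r) ℝ)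
    (hYhat_e : Yhat *ᵥ (fun _ => (1 : ℝ)) = Sum.elim (1 : Fin 1 → ℝ) (0 : Fin r → ℝ)) :
    let H : Matrix (Fin k ⊕ (Fin 1 ⊕ Fin r)) (Fin k ⊕ (Fin 1 ⊕ Fin r)) ℝ :=
      ξ • (L * Lᵀ) + ((1 - ξ) / ((k : ℝ) + (1 + r))) • Matrix.of (fun _ _ => (1 : ℝ))
    let Xhat : Matrix (Fin k ⊕ (Fin 1 ⊕ Fin r)) (Fin k ⊕ (Fin 1 ⊕ Fin r)) ℝ :=
      Matrix.fromBlocks 1 0 0 Yhat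
    ∀ (i : Fin r) (j : Fin k ⊕ (Fin 1 ⊕ Fin r)),
      (Xhat * (P * H * Pᵀ) * Xhat⁻¹) (Sum.inr (Sum.inr i)) j = 0 := by
  intro H Xhat i j
  obtain ⟨σ, rfl⟩ := hP
  have hPHP_bottom : ∀ s l, (σ.permMatrix ℝ * H * (σ.permMatrix ℝ)ᵀ) (Sum.inr s) l =
      (1 - ξ) / ((k : ℝ) + (1 + r)) := fun s =>
    permMatrix_conj_apply_of_conj_row_eq_zero σ (i := Sum.inr s)
      (by rw [hL]; ext (_ | _) <;> simp) _ _
  have hrow : (Xhat * (σ.permMatrix ℝ * H * (σ.permMatrix ℝ)ᵀ)) (Sum.inr (Sum.inr i)) = 0 := by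
    funext l
    refine (fromBlocks_one_zero_zero_mul_apply_inr Yhat (fun s => hPHP_bottom s l) _).trans ?_
    simp [hYhat_e]
  exact mul_apply_eq_zero_of_row_eq_zero hrow _ _

/-- Remark 3.2 (generalization of Theorem 3.1): for any invertible `Ŷ` with
`Ŷ e = e₁` and `X̂ = diag(I_k, Ŷ)`, if `P L Pᵀ = [[L₁₁, L₁₂], [0, 0]]`, then the
last `m − 1` rows of `X̂ P H Pᵀ X̂⁻¹` are zero. Here `m = 1 + r` and `Fin m` is
realized as `Fin 1 ⊕ Fin r`. -/
theorem generalized_lumping_zero_rows (k r : ℕ)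
    (ξ : ℝ) (hξ0 : 0 < ξ) (hξ1 : ξ < 1)
    (L P : Matrix (Fin k ⊕ (Fin 1 ⊕ Fin r)) (Fin k ⊕ (Fin 1 ⊕ Fin r)) ℝ)
    (hP : ∃ σ : Equiv.Perm (Fin k ⊕ (Fin 1 ⊕ Fin r)), P = σ.permMatrix ℝ)
    (L11 : Matrix (Fin k) (Fin k) ℝ) (L12 : Matrix (Fin k) (Fin 1 ⊕ Fin r) ℝ)
    (hL : P * L * Pᵀ = Matrix.fromBlocks L11 L12 0 0)
    (Yhat : Matrix (Fin 1 ⊕ Fin r) (Fin 1 ⊕ Fin r) ℝ)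
    (hYhat_inv : IsUnit Yhat)
    (hYhat_e : Yhat *ᵥ (fun _ => (1 : ℝ)) = Sum.elim (1 : Fin 1 → ℝ) (0 : Fin r → ℝ)) :
    let H : Matrix (Fin k ⊕ (Fin 1 ⊕ Fin r)) (Fin k ⊕ (Fin 1 ⊕ Fin r)) ℝ :=
      ξ • (L * Lᵀ) + ((1 - ξ) / ((k : ℝ) + (1 + r))) • Matrix.of (fun _ _ => (1 : ℝ))
    let Xhat : Matrix (Fin k ⊕ (Fin 1 ⊕ Fin r)) (Fin k ⊕ (Fin 1 ⊕ Fin r)) ℝ :=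
      Matrix.fromBlocks 1 0 0 Yhat
    ∀ (i : Fin r) (j : Fin k ⊕ (Fin 1 ⊕ Fin r)),
      (Xhat * (P * H * Pᵀ) * Xhat⁻¹) (Sum.inr (Sum.inr i)) j = 0 :=
  generalized_lumping_zero_rows_general k r ξ L P hP L11 L12 hL Yhat hYhat_e
end
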